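/- arXiv:1105.0202 — 2 statements merged into one kernel-verified Lean document; each statement's English description precedes it below -/
import Mathlib

section
/- Let l', t be real numbers with l' > 0 and l'_t ≥ l' > 0 satisfying cosh(l'_t/2)/cosh(l'/2) = cosh(t/2). Then log(l'_t/l') ≤ 2·cosh(t/2)·(1 + exp(−l'))/l'. -/
/-!
Since `exp x ≤ 2 cosh x` and `2 cosh (l'/2) = exp (l'/2) (1 + exp (-l'))`, the relation
`cosh (l'_t/2) = cosh (t/2) cosh (l'/2)` gives `exp ((l'_t - l')/2) ≤ cosh (t/2) (1 + exp (-l'))`.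
With `x + 1 ≤ exp x` this bounds `l'_t - l'` linearly by `2 cosh (t/2) (1 + exp (-l'))`, and
`log (l'_t/l') ≤ l'_t/l' - 1 = (l'_t - l')/l'` finishes.
-/

open Real

theorem Real.exp_le_two_mul_cosh (x : ℝ) : exp x ≤ 2 * cosh x := by
  rw [cosh_eq]
  linarith [exp_pos (-x)]

theorem Real.two_mul_cosh_half (x : ℝ) : 2 * cosh (x / 2) = exp (x / 2) * (1 + exp (-x)) := by
  rw [cosh_eq, mul_add, ← exp_add]
  ring_nf

theorem Real.sub_le_of_cosh_half_eq_mul_cosh_half {a b c : ℝ} (h : cosh (b / 2) = c * cosh (a / 2)) :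
    b - a ≤ 2 * (c * (1 + exp (-a)) - 1) := by
  have hexp : exp ((b - a) / 2) * exp (a / 2) ≤ c * (1 + exp (-a)) * exp (a / 2) :=
    calc exp ((b - a) / 2) * exp (a / 2) = exp (b / 2) := by rw [← exp_add]; ring_nf
      _ ≤ 2 * cosh (b / 2) := exp_le_two_mul_cosh _
      _ = c * (2 * cosh (a / 2)) := by rw [h]; ring
      _ = c * (1 + exp (-a)) * exp (a / 2) := by rw [two_mul_cosh_half]; ring
  have := le_of_mul_le_mul_right hexp (exp_pos _)
  linarith [add_one_le_exp ((b - a) / 2)]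

theorem Real.log_div_le_sub_div {a b : ℝ} (ha : 0 < a) (hb : 0 < b) :
    log (b / a) ≤ (b - a) / a := by
  rw [sub_div, div_self ha.ne']
  exact log_le_sub_one_of_pos (div_pos hb ha)

theorem stmt3 (l' t l't : ℝ) (hl' : 0 < l') (hle : l' ≤ l't)
    (h : Real.cosh (l't/2) / Real.cosh (l'/2) = Real.cosh (t/2)) :
    Real.log (l't/l') ≤ 2 * Real.cosh (t/2) * (1 + Real.exp (-l')) / l' := by
  have hcosh : cosh (l't / 2) = cosh (t / 2) * cosh (l' / 2) :=
    (div_eq_iff (cosh_pos _).ne').mp h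
  have hsub := sub_le_of_cosh_half_eq_mul_cosh_half hcosh
  calc log (l't / l') ≤ (l't - l') / l' := log_div_le_sub_div hl' (hl'.trans_le hle)
    _ ≤ 2 * cosh (t / 2) * (1 + exp (-l')) / l' := by
      gcongr
      linarith
end

section
/- With A(l), B(l) as in Okai's twist formula for the one-holed torus (A(l) = cosh²(l/2)(cosh²(t/2)(cosh l + cosh(l₀/2)) − 2sinh²(l/2)), B(l) = cosh²(t/2)(cosh²(l/2) + cosh(l₀/2)) + sinh²(l/2)cosh(l₀/2)), one has A(l) ≥ B(l) > 1 for all real l > 0, t, and l₀ ≥ 0. -/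
/-! Writing `cosh l = 2 cosh² (l/2) - 1` and `cosh² = sinh² + 1`, the difference `A - B` factors
into a product of two squares and a positive term; and `B ≥ 1 · (1 + 1)` since
`cosh ≥ 1`. -/

noncomputable def Aok (t l₀ l : ℝ) : ℝ :=
  Real.cosh (l/2) ^ 2 *
    (Real.cosh (t/2) ^ 2 * (Real.cosh l + Real.cosh (l₀/2)) - 2 * Real.sinh (l/2) ^ 2)

noncomputable def Bok (t l₀ l : ℝ) : ℝ :=
  Real.cosh (t/2) ^ 2 * (Real.cosh (l/2) ^ 2 + Real.cosh (l₀/2)) +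
    Real.sinh (l/2) ^ 2 * Real.cosh (l₀/2)

open Real

theorem Aok_sub_Bok (t l₀ l : ℝ) :
    Aok t l₀ l - Bok t l₀ l =
      sinh (l/2) ^ 2 * sinh (t/2) ^ 2 * (2 * cosh (l/2) ^ 2 + cosh (l₀/2)) := by
  have hcosh : cosh l = cosh (l/2) ^ 2 + sinh (l/2) ^ 2 := by
    rw [← cosh_two_mul, mul_div_cancel₀ l two_ne_zero]
  simp only [Aok, Bok, hcosh, cosh_sq]
  ring

theorem Bok_le_Aok (t l₀ l : ℝ) : Bok t l₀ l ≤ Aok t l₀ l := by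
  rw [← sub_nonneg, Aok_sub_Bok]
  have := cosh_pos (l₀/2)
  positivity

theorem two_le_Bok (t l₀ l : ℝ) : 2 ≤ Bok t l₀ l := by
  have hC := one_le_cosh (t/2)
  have hc := one_le_cosh (l/2)
  have hK := one_le_cosh (l₀/2)
  calc (2 : ℝ) = 1 ^ 2 * (1 ^ 2 + 1) + 0 := by norm_num
    _ ≤ Bok t l₀ l := by unfold Bok; gcongr; positivity

theorem stmt6_general (t l₀ l : ℝ) :
    Aok t l₀ l ≥ Bok t l₀ l ∧ Bok t l₀ l > 1 :=
  ⟨Bok_le_Aok t l₀ l, by linarith [two_le_Bok t l₀ l]⟩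

theorem stmt6 (t l₀ l : ℝ) (hl : 0 < l) (hl₀ : 0 ≤ l₀) :
    Aok t l₀ l ≥ Bok t l₀ l ∧ Bok t l₀ l > 1 :=
  stmt6_general t l₀ l
end
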